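/- arXiv:1612.05191 — 3 statements merged into one kernel-verified Lean document; each statement's English description precedes it below -/
import Mathlib

section
/- For natural numbers e and k with 1 ≤ e ≤ k, the ratio of the falling factorial k(k-1)⋯(k-e+1) = k!/(k-e)! to k^e is at least exp(-e), i.e., k!/((k-e)! * k^e) ≥ exp(-e). -/
theorem stmt_1 (e k : ℕ) (he : 1 ≤ e) (hek : e ≤ k) :
    Real.exp (-(e : ℝ)) ≤ (k.factorial : ℝ) / ((k - e).factorial * (k : ℝ) ^ e) := by
  have hk0 : (0:ℝ) < k := by
    have : 1 ≤ k := le_trans he hek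
    exact_mod_cast Nat.pos_of_ne_zero (by omega)
  have he0 : (0:ℝ) < e := by exact_mod_cast he
  -- rewrite k! = (k-e)! * descFactorial
  have hfact : (k.factorial : ℝ) = ((k - e).factorial : ℝ) * (k.descFactorial e : ℝ) := by
    exact_mod_cast congrArg (Nat.cast (R := ℝ)) (Nat.factorial_mul_descFactorial hek).symm
  have hne : ((k - e).factorial : ℝ) ≠ 0 := by positivity
  rw [hfact, mul_div_mul_left _ _ hne]
  -- descFactorial / k^e = ∏ (k - i)/k
  have hprod : (k.descFactorial e : ℝ) / (k : ℝ) ^ e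
      = ∏ i ∈ Finset.range e, ((k : ℝ) - i) / k := by
    rw [Nat.descFactorial_eq_prod_range, Nat.cast_prod, Finset.prod_div_distrib,
      Finset.prod_const, Finset.card_range]
    congr 1
    refine Finset.prod_congr rfl fun i hi => ?_
    have : i ≤ k := le_trans (le_of_lt (Finset.mem_range.mp hi)) (le_trans hek le_rfl)
    push_cast [Nat.cast_sub this]
    ring
  rw [hprod]
  have hmid : (e.factorial : ℝ) / (e : ℝ) ^ e
      = ∏ i ∈ Finset.range e, ((e : ℝ) - i) / e := by
    rw [← Nat.descFactorial_self e, Nat.descFactorial_eq_prod_range, Nat.cast_prod,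
      Finset.prod_div_distrib, Finset.prod_const, Finset.card_range]
    congr 1
    refine Finset.prod_congr rfl fun i hi => ?_
    have : i ≤ e := le_of_lt (Finset.mem_range.mp hi)
    push_cast [Nat.cast_sub this]
    ring
  have h1 : Real.exp (-(e : ℝ)) ≤ (e.factorial : ℝ) / (e : ℝ) ^ e := by
    have hpe : ((e : ℝ)) ^ e / (e.factorial : ℝ) ≤ Real.exp e :=
      Real.pow_div_factorial_le_exp (e:ℝ) he0.le e
    have hf0 : (0:ℝ) < (e.factorial : ℝ) := by positivity
    rw [Real.exp_neg]
    rw [div_le_iff₀ hf0] at hpe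
    rw [inv_le_iff_one_le_mul₀ (Real.exp_pos _), div_mul_eq_mul_div, le_div_iff₀ (by positivity),
      one_mul]
    linarith [hpe]
  refine le_trans h1 ?_
  rw [hmid]
  refine Finset.prod_le_prod (fun i _ => ?_) (fun i hi => ?_)
  · have hie : (i : ℝ) ≤ e := by
      have : i < e := by simpa using Finset.mem_range.mp ‹i ∈ Finset.range e›
      exact_mod_cast this.le
    exact div_nonneg (by linarith) he0.le
  · have hie : (i : ℝ) ≤ e := by
      have : i < e := Finset.mem_range.mp hi
      exact_mod_cast this.le
    have hke : (e : ℝ) ≤ k := by exact_mod_cast hek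
    rw [div_le_div_iff₀ he0 hk0]
    nlinarith [Nat.cast_nonneg (α := ℝ) i]
end

section
/- Let k ≥ 1 and let S be a finite set of indices with |S| = e ≤ k, each s ∈ S assigned a probability x_s ≥ 0 with z := Σ_{s∈S} x_s ≤ e/k ≤ 1. Draw k independent samples, where each sample equals s with probability x_s (and with probability 1 - z lands outside S). Then the probability that every element of S is sampled at least once is at least (k!/(k-e)!) · (1-z)^{k-e} · ∏_{s∈S} x_s. -/
/-!
For each injection `f : S ↪ Fin k` consider the event that every `s ∈ S` is drawn exactly at
step `f s` and every other step lands outside `S`. By independence it has probability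
`(∏ s ∈ S, x s) * (1 - z) ^ (k - |S|)`; the events for different `f` are disjoint (the step
at which `s` is drawn recovers `f s`), and each of them implies that all of `S` is covered.
Summing over the `k.descFactorial |S|` injections gives the bound.
-/

open MeasureTheory ProbabilityTheory

open Finset in
theorem Fintype.prod_eq_prod_comp_embedding_mul_pow {α β M : Type*} [Fintype α] [Fintype β]
    [CommMonoid M] (f : α ↪ β) (g : β → M) {c : M} (hc : ∀ b ∉ Set.range f, g b = c) :
    ∏ b, g b = (∏ a, g (f a)) * c ^ (Fintype.card β - Fintype.card α) := by
  classical
  rw [← prod_mul_prod_compl (univ.map f), prod_map]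
  congr 1
  rw [prod_eq_pow_card fun b hb => hc b (by simpa using hb), card_compl, card_map, card_univ]

theorem ProbabilityTheory.iIndepFun.measureReal_iInter_preimage {Ω τ : Type*}
    [MeasurableSpace Ω] {μ : Measure Ω} [IsFiniteMeasure μ] [Fintype τ] {β : τ → Type*}
    {m : ∀ t, MeasurableSpace (β t)} {Y : ∀ t, Ω → β t} (hY : iIndepFun Y μ)
    {B : ∀ t, Set (β t)} (hB : ∀ t, MeasurableSet (B t)) :
    μ.real (⋂ t, Y t ⁻¹' B t) = ∏ t, μ.real (Y t ⁻¹' B t) := by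
  simpa [measureReal_def, ENNReal.toReal_prod] using
    congrArg ENNReal.toReal (hY.measure_inter_preimage_eq_mul Finset.univ fun t _ => hB t)

section HitPattern

variable {Ω ι τ : Type*} {S : Finset ι} (f : S ↪ τ)

/-- The values allowed at step `t` when each `s ∈ S` is to be drawn exactly at step `f s`. -/
def hitPattern (t : τ) : Set ι :=
  {i | ∀ s : S, (s : ι) = i ↔ f s = t}

theorem hitPattern_apply (s : S) : hitPattern f (f s) = {(s : ι)} := by
  ext i
  simp only [hitPattern, f.injective.eq_iff, Set.mem_singleton_iff]
  exact ⟨fun h => ((h s).2 rfl).symm, fun h s' => by rw [h, Subtype.coe_inj]⟩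

theorem hitPattern_of_notMem_range {t : τ} (ht : t ∉ Set.range f) :
    hitPattern f t = (S : Set ι)ᶜ := by
  ext i
  simp only [hitPattern, Set.mem_compl_iff, Finset.mem_coe]
  exact ⟨fun h hi => ht ⟨⟨i, hi⟩, (h ⟨i, hi⟩).1 rfl⟩,
    fun hi s => iff_of_false (fun hs => hi (hs ▸ s.2)) fun hs => ht ⟨s, hs⟩⟩

theorem measurableSet_hitPattern [MeasurableSpace ι] [MeasurableSingletonClass ι] (t : τ) :
    MeasurableSet (hitPattern f t) := by
  by_cases ht : t ∈ Set.range f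
  · obtain ⟨s, rfl⟩ := ht
    simp [hitPattern_apply]
  · simpa [hitPattern_of_notMem_range f ht] using S.measurableSet.compl

def exactHitEvent (Y : τ → Ω → ι) : Set Ω :=
  ⋂ t, Y t ⁻¹' hitPattern f t

variable {f} {Y : τ → Ω → ι}

theorem mem_exactHitEvent {ω : Ω} :
    ω ∈ exactHitEvent f Y ↔ ∀ t (s : S), (s : ι) = Y t ω ↔ f s = t := by
  simp [exactHitEvent, hitPattern]

theorem exactHitEvent_subset : exactHitEvent f Y ⊆ {ω | ∀ s ∈ S, ∃ t, Y t ω = s} :=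
  fun _ hω s hs => ⟨f ⟨s, hs⟩, ((mem_exactHitEvent.1 hω _ ⟨s, hs⟩).2 rfl).symm⟩

variable (S Y) in
open Function in
theorem pairwise_disjoint_exactHitEvent :
    Pairwise (Disjoint on fun f : S ↪ τ => exactHitEvent f Y) := by
  intro f g hfg
  refine Set.disjoint_left.2 fun ω hf hg => hfg (DFunLike.ext f g fun s => ?_)
  exact ((mem_exactHitEvent.1 hg (f s) s).1 ((mem_exactHitEvent.1 hf (f s) s).2 rfl)).symm

end HitPattern

section Measure

variable {Ω ι τ : Type*} [MeasurableSpace Ω] [MeasurableSpace ι] [MeasurableSingletonClass ι]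
  {μ : Measure Ω} {S : Finset ι} {Y : τ → Ω → ι} [Fintype τ]

theorem measurableSet_exactHitEvent (hY : ∀ t, Measurable (Y t)) (f : S ↪ τ) :
    MeasurableSet (exactHitEvent f Y) :=
  .iInter fun t => hY t (measurableSet_hitPattern f t)

theorem measureReal_exactHitEvent [IsProbabilityMeasure μ] (hY : ∀ t, Measurable (Y t))
    (hindep : iIndepFun Y μ) {p : ι → ℝ} (hp : ∀ t, ∀ s ∈ S, μ.real (Y t ⁻¹' {s}) = p s)
    (f : S ↪ τ) :
    μ.real (exactHitEvent f Y) =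
      (∏ s ∈ S, p s) * (1 - ∑ s ∈ S, p s) ^ (Fintype.card τ - S.card) := by
  rw [exactHitEvent, hindep.measureReal_iInter_preimage (measurableSet_hitPattern f),
    Fintype.prod_eq_prod_comp_embedding_mul_pow f _ (c := 1 - ∑ s ∈ S, p s), Fintype.card_coe,
    ← Finset.prod_coe_sort S]
  · exact congrArg (· * _) (Finset.prod_congr rfl fun s _ => by rw [hitPattern_apply, hp _ s s.2])
  · intro t ht
    rw [hitPattern_of_notMem_range f ht, Set.preimage_compl,
      probReal_compl_eq_one_sub (hY t S.measurableSet),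
      ← sum_measureReal_preimage_singleton S fun s _ => hY t (measurableSet_singleton s),
      Finset.sum_congr rfl (hp t)]

end Measure

theorem stmt_9_general {Ω : Type*} [MeasurableSpace Ω] (μ : Measure Ω) [IsProbabilityMeasure μ]
    {ι : Type*} [mι : MeasurableSpace ι] [MeasurableSingletonClass ι]
    (k e : ℕ) (S : Finset ι) (hcard : S.card = e)
    (x : ι → ℝ)
    (z : ℝ) (hz : z = ∑ s ∈ S, x s)
    (Y : Fin k → Ω → ι) (hY : ∀ t, Measurable (Y t))
    (hindep : iIndepFun Y μ)
    (hprob : ∀ t : Fin k, ∀ s ∈ S, (μ (Y t ⁻¹' {s})).toReal = x s) :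
    (k.descFactorial e : ℝ) * (1 - z) ^ (k - e) * ∏ s ∈ S, x s ≤
      (μ {ω | ∀ s ∈ S, ∃ t, Y t ω = s}).toReal := by
  subst hz hcard
  calc (k.descFactorial S.card : ℝ) * (1 - ∑ s ∈ S, x s) ^ (k - S.card) * ∏ s ∈ S, x s
      = ∑ f : S ↪ Fin k, μ.real (exactHitEvent f Y) := by
        simp only [measureReal_exactHitEvent hY hindep hprob, Finset.sum_const, Finset.card_univ,
          Fintype.card_embedding_eq, Fintype.card_coe, Fintype.card_fin, nsmul_eq_mul]
        ring
    _ = μ.real (⋃ f : S ↪ Fin k, exactHitEvent f Y) :=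
        (measureReal_iUnion_fintype (pairwise_disjoint_exactHitEvent S Y)
          (measurableSet_exactHitEvent hY)).symm
    _ ≤ μ.real {ω | ∀ s ∈ S, ∃ t, Y t ω = s} :=
        measureReal_mono (Set.iUnion_subset fun _ => exactHitEvent_subset)

theorem stmt_9 {Ω : Type*} [MeasurableSpace Ω] (μ : Measure Ω) [IsProbabilityMeasure μ]
    {ι : Type*} [Fintype ι] [mι : MeasurableSpace ι] [MeasurableSingletonClass ι]
    (k e : ℕ) (hk : 1 ≤ k) (S : Finset ι) (hcard : S.card = e) (hek : e ≤ k)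
    (x : ι → ℝ) (hx : ∀ s ∈ S, 0 ≤ x s)
    (z : ℝ) (hz : z = ∑ s ∈ S, x s) (hze : z ≤ (e : ℝ) / (k : ℝ))
    (Y : Fin k → Ω → ι) (hY : ∀ t, Measurable (Y t))
    (hindep : iIndepFun Y μ)
    (hprob : ∀ t : Fin k, ∀ s ∈ S, (μ (Y t ⁻¹' {s})).toReal = x s) :
    (k.descFactorial e : ℝ) * (1 - z) ^ (k - e) * ∏ s ∈ S, x s ≤
      (μ {ω | ∀ s ∈ S, ∃ t, Y t ω = s}).toReal :=
  stmt_9_general μ (mι := mι) k e S hcard x z hz Y hY hindep hprob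
end

section
/- Let k ≥ 1 and let S be a set of size e ≤ k with probabilities x_s ≥ 0 summing to z ≤ e/k. Under k i.i.d. draws where each draw equals s with probability x_s, the probability that every s ∈ S occurs at least once is at least exp(-e) · (k!/(k-e)!) · ∏_{s∈S} x_s. -/
/-!
For each injection `f` of `S` into the `k` draws, consider the event that draw `f s` equals `s`
for every `s ∈ S` while every other draw falls outside `S`. These events are pairwise disjoint,
contained in the event that every `s ∈ S` occurs, and by independence each has probability
`(∏ s, x s) * (1 - z) ^ (k - e)`. There are `k.descFactorial e` injections, and
`(1 - z) ^ (k - e) ≥ (1 - e / k) ^ (k - e) ≥ exp (-e)` since `1 + a ≤ exp a` for `a = e / (k - e)`.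
-/

open MeasureTheory ProbabilityTheory Finset

theorem Real.exp_neg_le_one_sub_div_pow {k e : ℕ} (hek : e ≤ k) :
    Real.exp (-e) ≤ (1 - e / k) ^ (k - e) := by
  obtain rfl | hlt := hek.eq_or_lt
  · simp
  have hke : (0 : ℝ) < k - e := sub_pos.mpr (by exact_mod_cast hlt)
  have hk : (0 : ℝ) < k := by linarith [(e.cast_nonneg : (0 : ℝ) ≤ e)]
  have hbase : Real.exp (-(e / (k - e))) ≤ 1 - e / k :=
    calc Real.exp (-(e / (k - e))) = (Real.exp (e / (k - e)))⁻¹ := Real.exp_neg _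
      _ ≤ ((e / (k - e) + 1 : ℝ))⁻¹ := inv_anti₀ (by positivity) (Real.add_one_le_exp _)
      _ = 1 - e / k := by field_simp; ring
  calc Real.exp (-e) = Real.exp (-(e / (k - e))) ^ (k - e) := by
        rw [← Real.exp_nat_mul, Nat.cast_sub hek]; congr 1; field_simp
    _ ≤ (1 - e / k) ^ (k - e) := pow_le_pow_left₀ (Real.exp_nonneg _) hbase _

theorem Real.exp_neg_le_one_sub_pow {k e : ℕ} {z : ℝ} (hek : e ≤ k) (hz : z ≤ e / k) :
    Real.exp (-e) ≤ (1 - z) ^ (k - e) := by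
  refine (Real.exp_neg_le_one_sub_div_pow hek).trans (pow_le_pow_left₀ ?_ (by linarith) _)
  rw [sub_nonneg]
  exact div_le_one_of_le₀ (by exact_mod_cast hek) (Nat.cast_nonneg k)

section Placement

variable {Ω ι T : Type*}

def placementCell (S : Finset ι) (f : S ↪ T) (t : T) : Set ι :=
  {i | ∀ s : S, i = s ↔ f s = t}

theorem placementCell_apply (S : Finset ι) (f : S ↪ T) (s : S) :
    placementCell S f (f s) = {(s : ι)} := by
  ext i
  simp only [placementCell, Set.mem_singleton_iff, f.injective.eq_iff]
  refine ⟨fun h => (h s).2 rfl, fun h s' => ?_⟩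
  rw [h, Subtype.coe_inj, eq_comm]

theorem placementCell_of_forall_ne {S : Finset ι} {f : S ↪ T} {t : T} (ht : ∀ s, f s ≠ t) :
    placementCell S f t = (↑S)ᶜ := by
  ext i
  simp [placementCell, ht]

theorem measurableSet_placementCell [MeasurableSpace ι] [MeasurableSingletonClass ι]
    (S : Finset ι) (f : S ↪ T) (t : T) : MeasurableSet (placementCell S f t) := by
  by_cases ht : ∃ s, f s = t
  · obtain ⟨s, rfl⟩ := ht
    rw [placementCell_apply]
    exact measurableSet_singleton _
  · rw [placementCell_of_forall_ne (not_exists.mp ht)]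
    exact S.measurableSet.compl

def placementEvent (Y : T → Ω → ι) (S : Finset ι) (f : S ↪ T) : Set Ω :=
  ⋂ t, Y t ⁻¹' placementCell S f t

theorem placementEvent_subset (Y : T → Ω → ι) (S : Finset ι) (f : S ↪ T) :
    placementEvent Y S f ⊆ {ω | ∀ s ∈ S, ∃ t, Y t ω = s} := by
  intro ω hω s hs
  refine ⟨f ⟨s, hs⟩, ?_⟩
  simpa [placementCell_apply] using Set.mem_iInter.mp hω (f ⟨s, hs⟩)

theorem pairwiseDisjoint_placementEvent (Y : T → Ω → ι) (S : Finset ι) :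
    (Set.univ : Set (S ↪ T)).PairwiseDisjoint (placementEvent Y S) := by
  intro f _ g _ hfg
  obtain ⟨s, hs⟩ : ∃ s, f s ≠ g s := by
    by_contra! h
    exact hfg (DFunLike.ext f g h)
  refine Set.disjoint_left.mpr fun ω hωf hωg => hs ?_
  have hf : Y (f s) ω = s := by
    simpa [placementCell_apply] using Set.mem_iInter.mp hωf (f s)
  exact (((Set.mem_iInter.mp hωg (f s)) s).mp hf).symm

theorem sum_measureReal_placementEvent_le [MeasurableSpace Ω] [MeasurableSpace ι]
    [MeasurableSingletonClass ι] [Fintype T] {μ : Measure Ω} [IsFiniteMeasure μ]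
    {Y : T → Ω → ι} (hY : ∀ t, Measurable (Y t)) (S : Finset ι) :
    ∑ f : S ↪ T, μ.real (placementEvent Y S f) ≤ μ.real {ω | ∀ s ∈ S, ∃ t, Y t ω = s} := by
  rw [← measureReal_biUnion_finset (f := placementEvent Y S)
    (by simpa using pairwiseDisjoint_placementEvent Y S)
    fun f _ => MeasurableSet.iInter fun t => (measurableSet_placementCell S f t).preimage (hY t)]
  exact measureReal_mono (Set.iUnion₂_subset fun f _ => placementEvent_subset Y S f)

theorem measureReal_placementEvent [MeasurableSpace Ω] [MeasurableSpace ι]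
    [MeasurableSingletonClass ι] [Fintype T] [DecidableEq T] {μ : Measure Ω}
    {Y : T → Ω → ι} (hindep : iIndepFun Y μ) (S : Finset ι) (f : S ↪ T) :
    μ.real (placementEvent Y S f) =
      (∏ s : S, μ.real (Y (f s) ⁻¹' {(s : ι)})) * ∏ t ∈ (univ.map f)ᶜ, μ.real (Y t ⁻¹' (↑S)ᶜ) := by
  have hprod : μ.real (placementEvent Y S f) = ∏ t, μ.real (Y t ⁻¹' placementCell S f t) := by
    rw [measureReal_def, placementEvent,
      hindep.meas_iInter fun t => ⟨_, measurableSet_placementCell S f t, rfl⟩, ENNReal.toReal_prod]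
    rfl
  rw [hprod, ← prod_mul_prod_compl (univ.map f), prod_map]
  congr 1
  · simp only [placementCell_apply]
  · refine prod_congr rfl fun t ht => ?_
    rw [placementCell_of_forall_ne]
    simpa using ht

theorem measureReal_placementEvent_of_marginal [MeasurableSpace Ω] [MeasurableSpace ι]
    [MeasurableSingletonClass ι] [Fintype T] {μ : Measure Ω} [IsProbabilityMeasure μ]
    {Y : T → Ω → ι} (hY : ∀ t, Measurable (Y t)) (hindep : iIndepFun Y μ)
    {S : Finset ι} {p : ι → ℝ} (hp : ∀ t, ∀ s ∈ S, μ.real (Y t ⁻¹' {s}) = p s) (f : S ↪ T) :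
    μ.real (placementEvent Y S f) =
      (∏ s ∈ S, p s) * (1 - ∑ s ∈ S, p s) ^ (Fintype.card T - #S) := by
  classical
  have hmiss : ∀ t, μ.real (Y t ⁻¹' (↑S)ᶜ) = 1 - ∑ s ∈ S, p s := fun t => by
    rw [Set.preimage_compl, probReal_compl_eq_one_sub (S.measurableSet.preimage (hY t)),
      ← sum_measureReal_preimage_singleton S fun s _ => (measurableSet_singleton s).preimage (hY t),
      sum_congr rfl (hp t)]
  rw [measureReal_placementEvent hindep, prod_congr rfl fun t _ => hmiss t, prod_const,
    card_compl, card_map, card_univ, Fintype.card_coe]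
  congr 1
  rw [← prod_coe_sort S p]
  exact prod_congr rfl fun s _ => hp _ _ s.2

theorem descFactorial_mul_prod_mul_pow_le_measureReal [MeasurableSpace Ω] [MeasurableSpace ι]
    [MeasurableSingletonClass ι] [Fintype T] {μ : Measure Ω} [IsProbabilityMeasure μ]
    {Y : T → Ω → ι} (hY : ∀ t, Measurable (Y t)) (hindep : iIndepFun Y μ)
    {S : Finset ι} {p : ι → ℝ} (hp : ∀ t, ∀ s ∈ S, μ.real (Y t ⁻¹' {s}) = p s) :
    ((Fintype.card T).descFactorial #S : ℝ) * (∏ s ∈ S, p s) *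
        (1 - ∑ s ∈ S, p s) ^ (Fintype.card T - #S) ≤
      μ.real {ω | ∀ s ∈ S, ∃ t, Y t ω = s} := by
  classical
  calc _ = ∑ f : S ↪ T, μ.real (placementEvent Y S f) := by
        simp only [measureReal_placementEvent_of_marginal hY hindep hp, sum_const, card_univ,
          Fintype.card_embedding_eq, Fintype.card_coe, nsmul_eq_mul, mul_assoc]
    _ ≤ _ := sum_measureReal_placementEvent_le hY S

end Placement

theorem stmt_10_general {Ω : Type*} [MeasurableSpace Ω] (μ : Measure Ω) [IsProbabilityMeasure μ]
    {ι : Type*} [mι : MeasurableSpace ι] [MeasurableSingletonClass ι]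
    (k e : ℕ) (S : Finset ι) (hcard : S.card = e) (hek : e ≤ k)
    (x : ι → ℝ) (hx : ∀ s ∈ S, 0 ≤ x s)
    (z : ℝ) (hz : z = ∑ s ∈ S, x s) (hze : z ≤ (e : ℝ) / (k : ℝ))
    (Y : Fin k → Ω → ι) (hY : ∀ t, Measurable (Y t))
    (hindep : iIndepFun (m := fun _ => mι) Y μ)
    (hprob : ∀ t : Fin k, ∀ s ∈ S, (μ (Y t ⁻¹' {s})).toReal = x s) :
    (k.descFactorial e : ℝ) * Real.exp (-(e : ℝ)) * ∏ s ∈ S, x s ≤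
      (μ {ω | ∀ s ∈ S, ∃ t, Y t ω = s}).toReal := by
  have hcount := descFactorial_mul_prod_mul_pow_le_measureReal hY hindep hprob
  rw [Fintype.card_fin, hcard, ← hz] at hcount
  calc _ = (k.descFactorial e : ℝ) * (∏ s ∈ S, x s) * Real.exp (-e) := by ring
    _ ≤ (k.descFactorial e : ℝ) * (∏ s ∈ S, x s) * (1 - z) ^ (k - e) := by
        have hx_prod : 0 ≤ ∏ s ∈ S, x s := prod_nonneg hx
        gcongr
        exact Real.exp_neg_le_one_sub_pow hek hze
    _ ≤ _ := hcount

theorem stmt_10 {Ω : Type*} [MeasurableSpace Ω] (μ : Measure Ω) [IsProbabilityMeasure μ]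
    {ι : Type*} [Fintype ι] [mι : MeasurableSpace ι] [MeasurableSingletonClass ι]
    (k e : ℕ) (hk : 1 ≤ k) (S : Finset ι) (hcard : S.card = e) (hek : e ≤ k)
    (x : ι → ℝ) (hx : ∀ s ∈ S, 0 ≤ x s)
    (z : ℝ) (hz : z = ∑ s ∈ S, x s) (hze : z ≤ (e : ℝ) / (k : ℝ))
    (Y : Fin k → Ω → ι) (hY : ∀ t, Measurable (Y t))
    (hindep : iIndepFun (m := fun _ => mι) Y μ)
    (hprob : ∀ t : Fin k, ∀ s ∈ S, (μ (Y t ⁻¹' {s})).toReal = x s) :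
    (k.descFactorial e : ℝ) * Real.exp (-(e : ℝ)) * ∏ s ∈ S, x s ≤
      (μ {ω | ∀ s ∈ S, ∃ t, Y t ω = s}).toReal :=
  stmt_10_general μ (mι := mι) k e S hcard hek x hx z hz hze Y hY hindep hprob
end
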